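/- Let u₀(x) = (1/2)·χ_{[-1,1]}(x) be the uniform density on [-1,1]. Then for 0 ≤ t < 1, the function u(x,t) = (2-2t)^{-1}·χ_{[t-1,1-t]}(x) is a weak solution of ∂_t u = ∂_x[u·(2F-1)] with F(x,t) = ∫_{-∞}^x u(y,t) dy, and u(·,0) = u₀. -/

import Mathlib

open MeasureTheory Set

/-- Explicit solution with uniform initial datum. -/
noncomputable def uSol (x t : ℝ) : ℝ :=
  Set.indicator (Set.Icc (t - 1) (1 - t)) (fun _ => (2 - 2 * t)⁻¹) x

/-- Its cumulative distribution function. -/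
noncomputable def Fcdf (x t : ℝ) : ℝ := ∫ y in Set.Iic x, uSol y t

/-!
On `[t-1, 1-t]` the solution is the constant `(2-2t)⁻¹`, so
`∫ h u(·,s) = (2-2s)⁻¹ ∫_{s-1}^{1-s} h`, which is differentiated by the product rule and the
fundamental theorem of calculus. On the same interval `2F - 1 = x / (1-t)` is linear, and one
integration by parts of `∫ x h'(x) dx` turns the flux term into exactly that derivative.
-/

theorem hasDerivAt_integral_neg_self {f : ℝ → ℝ} (hf : Continuous f) (r : ℝ) :
    HasDerivAt (fun ρ => ∫ x in -ρ..ρ, f x) (f r + f (-r)) r := by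
  have hupper (a : ℝ) : HasDerivAt (fun ρ => ∫ x in (0 : ℝ)..ρ, f x) (f a) a :=
    (hf.integral_hasStrictDerivAt 0 a).hasDerivAt
  have hlower : HasDerivAt (fun ρ => ∫ x in (0 : ℝ)..-ρ, f x) (f (-r) * -1) r :=
    (hupper (-r)).comp r (hasDerivAt_neg r)
  have hsplit : (fun ρ => ∫ x in -ρ..ρ, f x)
      = fun ρ => (∫ x in (0 : ℝ)..ρ, f x) - ∫ x in (0 : ℝ)..-ρ, f x :=
    funext fun ρ => (intervalIntegral.integral_interval_sub_left
      (hf.intervalIntegrable _ _) (hf.intervalIntegrable _ _)).symm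
  rw [hsplit]
  exact ((hupper r).sub hlower).congr_deriv (by ring)

theorem integral_mul_deriv_neg_self {f : ℝ → ℝ} (hf : ContDiff ℝ 1 f) (r : ℝ) :
    ∫ x in -r..r, x * deriv f x = r * (f r + f (-r)) - ∫ x in -r..r, f x := by
  have hparts := intervalIntegral.integral_mul_deriv_eq_deriv_mul
    (a := -r) (b := r) (u := id) (v := f)
    (fun x _ => hasDerivAt_id x) (fun x _ => (hf.differentiable one_ne_zero x).hasDerivAt)
    (continuous_const.intervalIntegrable _ _) ((hf.continuous_deriv le_rfl).intervalIntegrable _ _)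
  simp only [id, one_mul] at hparts
  rw [hparts]
  ring

theorem uSol_zero (x : ℝ) :
    uSol x 0 = Set.indicator (Set.Icc (-1 : ℝ) 1) (fun _ => (1 : ℝ) / 2) x := by
  norm_num [uSol]

theorem integral_mul_uSol (f : ℝ → ℝ) {s : ℝ} (hs : s ≤ 1) :
    ∫ x, f x * uSol x s = (2 - 2 * s)⁻¹ * ∫ x in (s - 1)..(1 - s), f x := by
  have hpointwise : (fun x => f x * uSol x s)
      = Set.indicator (Set.Icc (s - 1) (1 - s)) (fun x => (2 - 2 * s)⁻¹ * f x) := by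
    ext x
    by_cases hx : x ∈ Set.Icc (s - 1) (1 - s) <;> simp [uSol, hx, mul_comm]
  rw [hpointwise, integral_indicator measurableSet_Icc, integral_Icc_eq_integral_Ioc,
    ← intervalIntegral.integral_of_le (by linarith), intervalIntegral.integral_const_mul]

theorem Fcdf_of_mem_Icc {x t : ℝ} (hx : x ∈ Set.Icc (t - 1) (1 - t)) :
    Fcdf x t = (2 - 2 * t)⁻¹ * (x - (t - 1)) := by
  have hinter : Set.Iic x ∩ Set.Icc (t - 1) (1 - t) = Set.Icc (t - 1) x := by
    ext y
    simp only [mem_inter_iff, mem_Iic, mem_Icc]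
    constructor
    · rintro ⟨hyx, hy, -⟩
      exact ⟨hy, hyx⟩
    · rintro ⟨hy, hyx⟩
      exact ⟨hyx, hy, hyx.trans hx.2⟩
  unfold Fcdf uSol
  rw [setIntegral_indicator measurableSet_Icc, hinter, setIntegral_const,
    Real.volume_real_Icc_of_le hx.1, smul_eq_mul, mul_comm]

theorem two_mul_Fcdf_sub_one_of_mem_Icc {x t : ℝ} (ht : t < 1)
    (hx : x ∈ Set.Icc (t - 1) (1 - t)) : 2 * Fcdf x t - 1 = x / (1 - t) := by
  have : (1 : ℝ) - t ≠ 0 := by linarith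
  rw [Fcdf_of_mem_Icc hx]
  field_simp
  ring

theorem hasDerivAt_integral_mul_uSol {h : ℝ → ℝ} (hh : Continuous h) {t : ℝ} (ht : t < 1) :
    HasDerivAt (fun s => ∫ x, h x * uSol x s)
      (2 * ((2 - 2 * t) ^ 2)⁻¹ * (∫ x in (t - 1)..(1 - t), h x)
        - (2 - 2 * t)⁻¹ * (h (1 - t) + h (t - 1))) t := by
  have hcoef : HasDerivAt (fun s : ℝ => (2 - 2 * s)⁻¹) (-(-2) / (2 - 2 * t) ^ 2) t :=
    ((((hasDerivAt_id' t).const_mul 2).const_sub 2).congr_deriv (by ring)).inv (by linarith)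
  have hmass : HasDerivAt (fun s => ∫ x in -(1 - s)..(1 - s), h x)
      ((h (1 - t) + h (-(1 - t))) * -1) t :=
    (hasDerivAt_integral_neg_self hh (1 - t)).comp t ((hasDerivAt_id t).const_sub 1)
  have hprod := hcoef.mul hmass
  simp only [neg_sub] at hprod
  refine (hprod.congr_of_eventuallyEq ?_).congr_deriv (by ring)
  filter_upwards [Iio_mem_nhds ht] with s hs
  exact integral_mul_uSol h (le_of_lt hs)

theorem integral_mul_uSol_mul_two_mul_Fcdf_sub_one {h : ℝ → ℝ} (hh : ContDiff ℝ 1 h)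
    {t : ℝ} (ht : t < 1) :
    ∫ x, deriv h x * uSol x t * (2 * Fcdf x t - 1)
      = (2 - 2 * t)⁻¹ * (h (1 - t) + h (t - 1))
        - 2 * ((2 - 2 * t) ^ 2)⁻¹ * ∫ x in (t - 1)..(1 - t), h x := by
  have hpointwise (x : ℝ) : deriv h x * uSol x t * (2 * Fcdf x t - 1)
      = x * deriv h x / (1 - t) * uSol x t := by
    by_cases hx : x ∈ Set.Icc (t - 1) (1 - t)
    · rw [two_mul_Fcdf_sub_one_of_mem_Icc ht hx]
      ring
    · simp [uSol, hx]
  have hne : (1 : ℝ) - t ≠ 0 := by linarith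
  simp_rw [hpointwise]
  rw [integral_mul_uSol _ ht.le, intervalIntegral.integral_div, show t - 1 = -(1 - t) by ring,
    integral_mul_deriv_neg_self hh]
  field_simp

theorem uniform_explicit_is_weak_solution :
    (∀ x : ℝ, uSol x 0 = Set.indicator (Set.Icc (-1 : ℝ) 1) (fun _ => (1 : ℝ) / 2) x) ∧
    (∀ h : ℝ → ℝ, ContDiff ℝ 1 h → HasCompactSupport h →
      ∀ t ∈ Set.Ioo (0 : ℝ) 1,
        HasDerivAt (fun s => ∫ x, h x * uSol x s)
          (-∫ x, deriv h x * uSol x t * (2 * Fcdf x t - 1)) t) := by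
  refine ⟨uSol_zero, fun h hh _ t ht => ?_⟩
  rw [integral_mul_uSol_mul_two_mul_Fcdf_sub_one hh ht.2, neg_sub]
  exact hasDerivAt_integral_mul_uSol hh.continuous ht.2
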